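/- For any real-valued u in L^2(T), ⟨L_u 1 | 1⟩ = -⟨u|1⟩, hence the lowest eigenvalue satisfies λ_0(u) ≤ -⟨u|1⟩, and equality λ_0(u) = -⟨u|1⟩ holds if and only if u is a constant function. -/

import Mathlib

open MeasureTheory Complex Real

noncomputable section

namespace BO

/-- The circle `ℝ/2πℤ`. -/
abbrev Circ := AddCircle (2 * π)

instance : Fact (0 < 2 * π) := ⟨by positivity⟩

/-- Normalized Haar measure on the circle (total mass `1`, i.e. `(1/2π) dx`). -/
abbrev μ : Measure Circ := AddCircle.haarAddCircle

/-- The inner ℂ product `⟨f|g⟩ = (1/2π)∫₀^{2π} f(x) conj (g x) dx`. -/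
def ip (f g : Circ → ℂ) : ℂ := ∫ x, f x * (starRingEnd ℂ) (g x) ∂μ

/-- The constant function `1`. -/
def one : Circ → ℂ := fun _ => 1

/-- `f` belongs to the Hardy space `L²₊`: `f ∈ L²` and all negative Fourier modes vanish. -/
def Hardy (f : Circ → ℂ) : Prop :=
  MemLp f 2 μ ∧ ∀ n : ℤ, n < 0 → fourierCoeff f n = 0

/-- `f` belongs to the Sobolev space `H¹`. -/
def H1 (f : Circ → ℂ) : Prop :=
  MemLp f 2 μ ∧ Summable fun n : ℤ => (n : ℝ) ^ 2 * ‖fourierCoeff f n‖ ^ 2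

/-- `P` is the Szegő projector `Π : L² → L²₊`. -/
def IsSzego (P : (Circ → ℂ) → Circ → ℂ) : Prop :=
  ∀ f, MemLp f 2 μ → MemLp (P f) 2 μ ∧
    ∀ n : ℤ, fourierCoeff (P f) n = if 0 ≤ n then fourierCoeff f n else 0

/-- `D` is the Fourier multiplier `-i ∂ₓ`, defined (at least) on `H¹`. -/
def IsD (D : (Circ → ℂ) → Circ → ℂ) : Prop :=
  ∀ f, H1 f → MemLp (D f) 2 μ ∧ ∀ n : ℤ, fourierCoeff (D f) n = n * fourierCoeff f n

/-- The shift operator `(S h)(x) = e^{ix} h(x)`. -/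
def shift (f : Circ → ℂ) : Circ → ℂ := fun x => fourier 1 x * f x

/-- The Toeplitz operator `T_u h = Π(u h)` with real symbol `u`. -/
def Toep (P : (Circ → ℂ) → Circ → ℂ) (u : Circ → ℝ) (f : Circ → ℂ) : Circ → ℂ :=
  P fun x => (u x : ℂ) * f x

/-- The Lax operator `L_u = D - T_u` of the Benjamin–Ono equation. -/
def Lax (P D : (Circ → ℂ) → Circ → ℂ) (u : Circ → ℝ) (f : Circ → ℂ) : Circ → ℂ :=
  fun x => D f x - Toep P u f x

/-- Spectral data for the selfadjoint operator `L_u`: `lam` lists the eigenvalues of `L_u`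
in increasing order with multiplicities, and `f` is a corresponding orthonormal basis
of eigenfunctions of the Hardy space. -/
structure EigenSystem (P D : (Circ → ℂ) → Circ → ℂ) (u : Circ → ℝ)
    (lam : ℕ → ℝ) (f : ℕ → Circ → ℂ) : Prop where
  hardy : ∀ n, Hardy (f n)
  sobolev : ∀ n, H1 (f n)
  ortho : ∀ m n, ip (f m) (f n) = if m = n then 1 else 0
  eigen : ∀ n, Lax P D u (f n) =ᵐ[μ] fun x => (lam n : ℂ) * f n x
  mono : Monotone lam
  complete : ∀ g, Hardy g → (∀ n, ip g (f n) = 0) → g =ᵐ[μ] 0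

section Aux
open Filter Submodule

lemma ip_congr_l {f g : Circ → ℂ} (hfg : f =ᵐ[μ] g) (h : Circ → ℂ) : ip f h = ip g h :=
  integral_congr_ae (hfg.mono fun x hx => by dsimp only; rw [hx])

lemma ip_congr_r {g h : Circ → ℂ} (hgh : g =ᵐ[μ] h) (f : Circ → ℂ) : ip f g = ip f h :=
  integral_congr_ae (hgh.mono fun x hx => by dsimp only; rw [hx])

lemma ip_conj (f g : Circ → ℂ) : ip f g = (starRingEnd ℂ) (ip g f) := by
  rw [ip, ip, ← integral_conj]
  exact integral_congr_ae (Eventually.of_forall fun x => by simp [mul_comm])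

lemma ip_one (g : Circ → ℂ) : ip g one = fourierCoeff g 0 := by
  simp [ip, one, fourierCoeff, fourier_zero]

lemma ip_neg_l (g h : Circ → ℂ) : ip (fun x => -g x) h = - ip g h := by
  simp [ip, ← integral_neg, neg_mul]

lemma ip_one_one : ip one one = 1 := by
  simp [ip, one]

lemma fc_congr {g h : Circ → ℂ} (he : g =ᵐ[μ] h) (n : ℤ) :
    fourierCoeff g n = fourierCoeff h n :=
  integral_congr_ae (he.mono fun x hx => by dsimp only; rw [hx])

lemma integrable_fourier_smul {g : Circ → ℂ} (hg : Integrable g μ) (n : ℤ) :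
    Integrable (fun t => fourier n t • g t) μ := by
  have := hg.bdd_mul (fourier n).continuous.aestronglyMeasurable
    (c := 1) (Eventually.of_forall fun x => ((fourier n).norm_coe_le_norm x).trans (fourier_norm n).le)
  simpa [smul_eq_mul] using this

lemma fc_sub {g h : Circ → ℂ} (hg : Integrable g μ) (hh : Integrable h μ) (n : ℤ) :
    fourierCoeff (fun x => g x - h x) n = fourierCoeff g n - fourierCoeff h n := by
  unfold fourierCoeff
  rw [← integral_sub (integrable_fourier_smul hg _) (integrable_fourier_smul hh _)]
  exact integral_congr_ae (Eventually.of_forall fun x => smul_sub _ _ _)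

lemma fc_one (n : ℤ) : fourierCoeff one n = if n = 0 then 1 else 0 := by
  classical
  have h0 : ((fourierLp (T := 2*π) 2 0 : Lp ℂ 2 μ) : Circ → ℂ) =ᵐ[μ] one := by
    filter_upwards [coeFn_fourierLp (T := 2*π) 2 0] with x hx
    rw [hx]; exact fourier_zero
  rw [← fc_congr h0 n, ← fourierBasis_repr, ← coe_fourierBasis, HilbertBasis.repr_self,
    lp.single_apply]
  simp [Pi.single_apply]

lemma fc_real (u : Circ → ℝ) (n : ℤ) :
    fourierCoeff (fun x => (u x : ℂ)) (-n) =
      (starRingEnd ℂ) (fourierCoeff (fun x => (u x : ℂ)) n) := by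
  unfold fourierCoeff
  rw [← integral_conj]
  refine integral_congr_ae (Eventually.of_forall fun x => ?_)
  simp only [smul_eq_mul, map_mul, neg_neg, Complex.conj_ofReal]
  rw [← fourier_neg, neg_neg]

lemma eq_zero_of_fc_zero {g : Circ → ℂ} (hg : MemLp g 2 μ)
    (h : ∀ n : ℤ, fourierCoeff g n = 0) : g =ᵐ[μ] 0 := by
  have h1 : fourierBasis.repr (hg.toLp g) = 0 := by
    ext n
    rw [fourierBasis_repr, fc_congr hg.coeFn_toLp n, h n]
    rfl
  have h2 : hg.toLp g = 0 := fourierBasis.repr.injective (by simpa using h1)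
  exact hg.coeFn_toLp.symm.trans (h2 ▸ Lp.coeFn_zero ℂ 2 μ)

lemma eq_of_fc_eq {g h : Circ → ℂ} (hg : MemLp g 2 μ) (hh : MemLp h 2 μ)
    (he : ∀ n : ℤ, fourierCoeff g n = fourierCoeff h n) : g =ᵐ[μ] h := by
  have hs : MemLp (fun x => g x - h x) 2 μ := hg.sub hh
  have := eq_zero_of_fc_zero hs (fun n => by
    rw [fc_sub (hg.integrable one_le_two) (hh.integrable one_le_two), he n, sub_self])
  filter_upwards [this] with x hx
  have hx0 : g x - h x = 0 := hx
  exact sub_eq_zero.mp hx0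
end Aux

section Aux2
open Filter Submodule

lemma memLp_one : MemLp one 2 μ := memLp_const 1

lemma H1_one : H1 one := by
  refine ⟨memLp_one, Summable.congr summable_zero fun n => ?_⟩
  rcases eq_or_ne n 0 with h | h <;> simp [fc_one, h]

lemma Toep_one (P : (Circ → ℂ) → Circ → ℂ) (u : Circ → ℝ) :
    Toep P u one = P (fun x => (u x : ℂ)) := by
  unfold Toep one; simp only [mul_one]

lemma D_one_ae_zero {D : (Circ → ℂ) → Circ → ℂ} (hD : IsD D) : D one =ᵐ[μ] 0 := by
  obtain ⟨hm, hc⟩ := hD one H1_one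
  refine eq_zero_of_fc_zero hm fun n => ?_
  rw [hc n, fc_one]
  rcases eq_or_ne n 0 with h | h <;> simp [h]

lemma part1 {P D : (Circ → ℂ) → Circ → ℂ} (hP : IsSzego P) (hD : IsD D)
    (u : Circ → ℝ) (hu : MemLp (fun x => (u x : ℂ)) 2 μ) :
    ip (Lax P D u one) one = - ip (fun x => (u x : ℂ)) one := by
  obtain ⟨hPm, hPc⟩ := hP _ hu
  obtain ⟨hDm, hDc⟩ := hD one H1_one
  rw [ip_one, ip_one]
  unfold Lax
  rw [Toep_one]
  rw [fc_sub (hDm.integrable one_le_two) (hPm.integrable one_le_two), hPc 0]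
  have h1 : fourierCoeff (D one) 0 = 0 := by rw [hDc]; simp
  rw [h1]
  simp

lemma inner_Lp (x y : Lp ℂ 2 μ) : (inner ℂ x y : ℂ) = ip y x := by
  rw [MeasureTheory.L2.inner_def]
  exact integral_congr_ae (Eventually.of_forall fun a => by
    show (inner ℂ (x a) (y a) : ℂ) = _
    rw [RCLike.inner_apply])

/-- `Lax P D u one` is a.e. `-P u`. -/
lemma Lax_one_ae {P D : (Circ → ℂ) → Circ → ℂ} (hD : IsD D) (u : Circ → ℝ) :
    Lax P D u one =ᵐ[μ] fun x => -(P (fun y => (u y : ℂ)) x) := by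
  filter_upwards [D_one_ae_zero hD] with x hx
  have hx0 : D one x = 0 := hx
  show D one x - Toep P u one x = _
  rw [hx0, Toep_one, zero_sub]

end Aux2

section Aux3
open Filter Submodule

lemma H1_summable_fc {g : Circ → ℂ} (hg : H1 g) :
    Summable fun n : ℤ => ‖fourierCoeff g n‖ := by
  have hsq : Summable fun n : ℤ => 1 / (n:ℝ)^2 :=
    (Real.summable_one_div_int_pow (p := 2)).2 one_lt_two
  set c : ℤ → ℝ := fun n => ‖fourierCoeff g n‖ with hc
  have hG : Summable fun n : ℤ =>
      (1/2) * (1/(n:ℝ)^2 + (n:ℝ)^2 * (c n)^2) + (if n = 0 then c 0 else 0) :=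
    ((hsq.add hg.2).mul_left (1/2)).add (hasSum_ite_eq (0:ℤ) (c 0)).summable
  refine Summable.of_nonneg_of_le (fun n => norm_nonneg _) (fun n => ?_) hG
  rcases eq_or_ne n 0 with h | h
  · subst h; simp [c]
  · have hne : ((n:ℝ)) ≠ 0 := Int.cast_ne_zero.2 h
    have h1 : (n:ℝ) * (1/(n:ℝ)) = 1 := mul_one_div_cancel hne
    have h2 : (1/(n:ℝ))^2 = 1/(n:ℝ)^2 := by rw [div_pow, one_pow]
    have h3 : (0:ℝ) ≤ c n := norm_nonneg _
    simp only [h, if_false, add_zero]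
    nlinarith [sq_nonneg (1/(n:ℝ) - (n:ℝ) * c n), sq_nonneg ((n:ℝ) * c n)]

lemma H1_exists_continuous {g : Circ → ℂ} (hg : H1 g) :
    ∃ gc : C(Circ, ℂ), g =ᵐ[μ] gc := by
  have hnorm : Summable fun n : ℤ => ‖fourierCoeff g n • (fourier n : C(Circ, ℂ))‖ := by
    refine (H1_summable_fc hg).congr fun n => ?_
    rw [norm_smul, fourier_norm, mul_one]
  have hFs : Summable fun n : ℤ => fourierCoeff g n • (fourier n : C(Circ, ℂ)) :=
    Summable.of_norm hnorm
  set gc : C(Circ, ℂ) := ∑' n : ℤ, fourierCoeff g n • (fourier n : C(Circ, ℂ)) with hgc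
  have hFsum : HasSum (fun n : ℤ => fourierCoeff g n • (fourier n : C(Circ, ℂ))) gc :=
    hFs.hasSum
  have hmap : HasSum (fun n : ℤ => fourierCoeff g n • fourierLp (T := 2*π) 2 n)
      (ContinuousMap.toLp (E := ℂ) 2 μ ℂ gc) := by
    have := hFsum.mapL (ContinuousMap.toLp (E := ℂ) 2 μ ℂ)
    simpa using this
  have hL2 : HasSum (fun n : ℤ => fourierCoeff g n • fourierLp (T := 2*π) 2 n)
      (hg.1.toLp g) := by
    have := hasSum_fourier_series_L2 (T := 2*π) (hg.1.toLp g)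
    refine this.congr_fun fun n => ?_
    rw [fc_congr hg.1.coeFn_toLp n]
  have heq : hg.1.toLp g = ContinuousMap.toLp (E := ℂ) 2 μ ℂ gc := hL2.unique hmap
  refine ⟨gc, ?_⟩
  have h1 : g =ᵐ[μ] (hg.1.toLp g : Circ → ℂ) := hg.1.coeFn_toLp.symm
  rw [heq] at h1
  exact h1.trans (ContinuousMap.coeFn_toLp (E := ℂ) (𝕜 := ℂ) μ gc)

lemma memLp_mul_of_ae_continuous {g h : Circ → ℂ} (hh : MemLp h 2 μ)
    (hgc : ∃ gc : C(Circ, ℂ), g =ᵐ[μ] gc) : MemLp (fun x => h x * g x) 2 μ := by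
  obtain ⟨gc, hg⟩ := hgc
  have hb : ∀ᵐ x ∂μ, ‖h x * g x‖ ≤ ‖gc‖ * ‖h x‖ := by
    filter_upwards [hg] with x hx
    rw [hx, norm_mul, mul_comm]
    exact mul_le_mul_of_nonneg_right (gc.norm_coe_le_norm x) (norm_nonneg _)
  have hms : AEStronglyMeasurable (fun x => h x * g x) μ :=
    hh.1.mul (gc.continuous.aestronglyMeasurable.congr hg.symm)
  exact MemLp.of_le_mul hh hms hb

end Aux3

section Aux4
open Filter Submodule

lemma inner_toLp {a b : Circ → ℂ} (ha : MemLp a 2 μ) (hb : MemLp b 2 μ) :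
    (inner ℂ (ha.toLp a) (hb.toLp b) : ℂ) = ip b a := by
  rw [inner_Lp]
  exact (ip_congr_l hb.coeFn_toLp _).trans (ip_congr_r ha.coeFn_toLp _)

lemma ip_szego {P : (Circ → ℂ) → Circ → ℂ} (hP : IsSzego P) {v : Circ → ℂ}
    (hv : MemLp v 2 μ) {g : Circ → ℂ} (hg : Hardy g) : ip (P v) g = ip v g := by
  obtain ⟨hPm, hPc⟩ := hP v hv
  have hA := fourierBasis.hasSum_inner_mul_inner (hg.1.toLp g) (hPm.toLp (P v))
  have hB := fourierBasis.hasSum_inner_mul_inner (hg.1.toLp g) (hv.toLp v)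
  have hterm : ∀ k : ℤ,
      (inner ℂ (hg.1.toLp g) (fourierBasis (T := 2*π) k) : ℂ) * inner ℂ (fourierBasis k) (hPm.toLp (P v))
      = inner ℂ (hg.1.toLp g) (fourierBasis k) * inner ℂ (fourierBasis k) (hv.toLp v) := by
    intro k
    have hPk : (inner ℂ (fourierBasis (T := 2*π) k) (hPm.toLp (P v)) : ℂ) = fourierCoeff (P v) k := by
      rw [← fourierBasis.repr_apply_apply, fourierBasis_repr, fc_congr hPm.coeFn_toLp]
    have hvk : (inner ℂ (fourierBasis (T := 2*π) k) (hv.toLp v) : ℂ) = fourierCoeff v k := by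
      rw [← fourierBasis.repr_apply_apply, fourierBasis_repr, fc_congr hv.coeFn_toLp]
    rcases le_or_gt 0 k with hk | hk
    · rw [hPk, hvk, hPc k, if_pos hk]
    · have hgk : (inner ℂ (hg.1.toLp g) (fourierBasis (T := 2*π) k) : ℂ) = 0 := by
        rw [← inner_conj_symm, ← fourierBasis.repr_apply_apply, fourierBasis_repr,
          fc_congr hg.1.coeFn_toLp, hg.2 k hk, map_zero]
      rw [hgk, zero_mul, zero_mul]
  have heq : (inner ℂ (hg.1.toLp g) (hPm.toLp (P v)) : ℂ) = inner ℂ (hg.1.toLp g) (hv.toLp v) :=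
    hA.unique (hB.congr_fun hterm)
  rw [inner_toLp hg.1 hPm, inner_toLp hg.1 hv] at heq
  exact heq

/-- The `k`-th Fourier coefficient as a continuous linear functional on `L²`. -/
def coeffCLM (k : ℤ) : Lp ℂ 2 μ →L[ℂ] ℂ :=
  LinearMap.mkContinuous
    { toFun := fun x => fourierBasis.repr x k
      map_add' := fun x y => by simp
      map_smul' := fun c x => by simp }
    1 (fun x => by
      simpa using lp.norm_apply_le_norm (by norm_num) (fourierBasis.repr x) k)

lemma coeffCLM_apply (k : ℤ) (x : Lp ℂ 2 μ) :
    coeffCLM k x = fourierCoeff (x : Circ → ℂ) k := fourierBasis_repr x k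

end Aux4


set_option maxHeartbeats 1000000 in
/-- `⟨L_u 1|1⟩ = -⟨u|1⟩`, hence the lowest eigenvalue satisfies
`λ₀(u) ≤ -⟨u|1⟩`, with equality iff `u` is a constant function. -/
theorem lowest_eigenvalue_bound (P D : (Circ → ℂ) → Circ → ℂ)
    (hP : IsSzego P) (hD : IsD D)
    (u : Circ → ℝ) (hu : MemLp (fun x => (u x : ℂ)) 2 μ)
    (lam : ℕ → ℝ) (f : ℕ → Circ → ℂ) (hsys : EigenSystem P D u lam f) :
    ip (Lax P D u one) one = - ip (fun x => (u x : ℂ)) one ∧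
    lam 0 ≤ -(ip (fun x => (u x : ℂ)) one).re ∧
    (lam 0 = -(ip (fun x => (u x : ℂ)) one).re ↔ ∃ c : ℝ, u =ᵐ[μ] fun _ => c) := by
  classical
  set uc : Circ → ℂ := fun x => (u x : ℂ) with huc
  have hpart1 : ip (Lax P D u one) one = - ip uc one := part1 hP hD u hu
  obtain ⟨hPm, hPc⟩ := hP uc hu
  obtain ⟨hDm, hDc⟩ := hD one H1_one
  -- E-side setup
  set V : ℕ → Lp ℂ 2 μ := fun n => (hsys.hardy n).1.toLp (f n) with hV
  have hVcoe : ∀ n, (V n : Circ → ℂ) =ᵐ[μ] f n := fun n => (hsys.hardy n).1.coeFn_toLp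
  have hVinner : ∀ (n) (x : Lp ℂ 2 μ), (inner ℂ (V n) x : ℂ) = ip (x : Circ → ℂ) (f n) := by
    intro n x; rw [inner_Lp, ip_congr_r (hVcoe n)]
  have hVo : Orthonormal ℂ V := by
    rw [orthonormal_iff_ite]
    intro i j
    rw [hVinner i (V j), ip_congr_l (hVcoe j), hsys.ortho j i]
    by_cases h : i = j <;> simp [h, eq_comm]
  set S := (Submodule.span ℂ (Set.range V)).topologicalClosure with hS
  haveI : CompleteSpace S := (Submodule.isClosed_topologicalClosure _).completeSpace_coe
  have hVS : ∀ n, V n ∈ S :=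
    fun n => Submodule.le_topologicalClosure _ (Submodule.subset_span ⟨n, rfl⟩)
  -- negative Fourier coefficients vanish on S
  have hScoeff : ∀ x : Lp ℂ 2 μ, x ∈ S → ∀ k : ℤ, k < 0 →
      fourierCoeff (x : Circ → ℂ) k = 0 := by
    intro x hx k hk
    have hle : S ≤ LinearMap.ker (coeffCLM k : Lp ℂ 2 μ →ₗ[ℂ] ℂ) := by
      apply Submodule.topologicalClosure_minimal
      · rw [Submodule.span_le]
        rintro _ ⟨n, rfl⟩
        simp only [SetLike.mem_coe, LinearMap.mem_ker]
        rw [ContinuousLinearMap.coe_coe, coeffCLM_apply, fc_congr (hVcoe n) k]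
        exact (hsys.hardy n).2 k hk
      · exact ContinuousLinearMap.isClosed_ker (coeffCLM k)
    have := hle hx
    rwa [LinearMap.mem_ker, ContinuousLinearMap.coe_coe, coeffCLM_apply] at this
  -- membership criterion for S
  have hmemS : ∀ (g : Circ → ℂ) (hg : MemLp g 2 μ),
      (∀ k : ℤ, k < 0 → fourierCoeff g k = 0) → hg.toLp g ∈ S := by
    intro g hg hneg
    set x := hg.toLp g with hxdef
    set s := ((S.orthogonalProjection x : S) : Lp ℂ 2 μ) with hsdef
    have hsS : s ∈ S := (S.orthogonalProjection x).2
    have hw : x - s ∈ Sᗮ := S.sub_starProjection_mem_orthogonal x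
    have hwcoe : ((x - s : Lp ℂ 2 μ) : Circ → ℂ) =ᵐ[μ] fun y => x y - s y :=
      Lp.coeFn_sub x s
    have hwneg : ∀ k : ℤ, k < 0 → fourierCoeff ((x - s : Lp ℂ 2 μ) : Circ → ℂ) k = 0 := by
      intro k hk
      rw [fc_congr hwcoe k,
        fc_sub ((Lp.memLp x).integrable one_le_two) ((Lp.memLp s).integrable one_le_two)]
      rw [fc_congr hg.coeFn_toLp k, hneg k hk, hScoeff s hsS k hk, sub_zero]
    have hperp : ∀ n, ip ((x - s : Lp ℂ 2 μ) : Circ → ℂ) (f n) = 0 := by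
      intro n
      rw [← hVinner n (x - s)]
      exact (Submodule.mem_orthogonal S (x - s)).mp hw (V n) (hVS n)
    have hz := hsys.complete _ ⟨Lp.memLp _, hwneg⟩ hperp
    have hz2 : x - s = 0 := (Lp.eq_zero_iff_ae_eq_zero).mpr hz
    have : x = s := sub_eq_zero.mp hz2
    rw [this]; exact hsS
  -- Hilbert basis of S
  set V' : ℕ → S := fun n => ⟨V n, hVS n⟩ with hV'
  have hV'o : Orthonormal ℂ V' := by
    rw [orthonormal_iff_ite]
    intro i j
    rw [Submodule.coe_inner]
    exact orthonormal_iff_ite.mp hVo i j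
  have hV'bot : (Submodule.span ℂ (Set.range V'))ᗮ = ⊥ := by
    rw [Submodule.eq_bot_iff]
    intro y hy
    have hHardy : Hardy ((y : Lp ℂ 2 μ) : Circ → ℂ) :=
      ⟨Lp.memLp _, fun k hk => hScoeff _ y.2 k hk⟩
    have hperp : ∀ n, ip ((y : Lp ℂ 2 μ) : Circ → ℂ) (f n) = 0 := by
      intro n
      rw [← hVinner n (y : Lp ℂ 2 μ)]
      have h0 : (inner ℂ (V' n) y : ℂ) = 0 :=
        (Submodule.mem_orthogonal _ y).mp hy (V' n) (Submodule.subset_span ⟨n, rfl⟩)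
      rw [Submodule.coe_inner] at h0
      exact h0
    have hz := hsys.complete _ hHardy hperp
    have : (y : Lp ℂ 2 μ) = 0 := (Lp.eq_zero_iff_ae_eq_zero).mpr hz
    exact Submodule.coe_eq_zero.mp this
  set b : HilbertBasis ℕ ℂ S := HilbertBasis.mkOfOrthogonalEqBot hV'o hV'bot with hbdef
  have hbco : ∀ n, (b n : S) = V' n := fun n =>
    congrFun (HilbertBasis.coe_mkOfOrthogonalEqBot hV'o hV'bot) n
  -- elements of S
  have h1S : memLp_one.toLp one ∈ S :=
    hmemS one memLp_one (fun k hk => by rw [fc_one]; simp [hk.ne])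
  set x1 : S := ⟨memLp_one.toLp one, h1S⟩ with hx1def
  have hLfun : Lax P D u one = fun x => D one x - P uc x := by
    funext x; simp only [Lax, Toep_one]; rfl
  have hLm : MemLp (Lax P D u one) 2 μ := by rw [hLfun]; exact hDm.sub hPm
  have hLneg : ∀ k : ℤ, k < 0 → fourierCoeff (Lax P D u one) k = 0 := by
    intro k hk
    rw [hLfun, fc_sub (hDm.integrable one_le_two) (hPm.integrable one_le_two),
      hDc k, fc_one, hPc k]
    simp [hk.ne, not_le.mpr hk]
  set xL : S := ⟨hLm.toLp _, hmemS _ hLm hLneg⟩ with hxLdef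
  -- inner ℂ products with the basis
  have hx1b : ∀ n, (inner ℂ (b n) x1 : ℂ) = ip one (f n) := by
    intro n
    rw [Submodule.coe_inner, hbco n, hx1def]
    show (inner ℂ (V n) (memLp_one.toLp one) : ℂ) = _
    rw [hVinner n, ip_congr_l memLp_one.coeFn_toLp]
  have hxLb : ∀ n, (inner ℂ (b n) xL : ℂ) = ip (Lax P D u one) (f n) := by
    intro n
    rw [Submodule.coe_inner, hbco n, hxLdef]
    show (inner ℂ (V n) (hLm.toLp _) : ℂ) = _
    rw [hVinner n, ip_congr_l hLm.coeFn_toLp]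
  -- the eigenvalue identity
  have hkey : ∀ n, ip (Lax P D u one) (f n) = (lam n : ℂ) * ip one (f n) := by
    intro n
    have hprod : MemLp (fun x => uc x * f n x) 2 μ :=
      memLp_mul_of_ae_continuous hu (H1_exists_continuous (hsys.sobolev n))
    obtain ⟨hTm, hTc⟩ := hP _ hprod
    obtain ⟨hDnm, hDnc⟩ := hD (f n) (hsys.sobolev n)
    have hLn : Lax P D u (f n) = fun x => D (f n) x - P (fun y => uc y * f n y) x := rfl
    have e0 := fc_congr (hsys.eigen n) 0
    rw [hLn, fc_sub (hDnm.integrable one_le_two) (hTm.integrable one_le_two),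
      fourierCoeff.const_mul, hDnc 0, hTc 0] at e0
    have hT0 : fourierCoeff (fun y => uc y * f n y) 0
        = -((lam n : ℂ) * fourierCoeff (f n) 0) := by
      simp only [Int.cast_zero, zero_mul, if_pos le_rfl, zero_sub] at e0
      linear_combination -e0
    have hfu : ip (f n) uc = fourierCoeff (fun y => uc y * f n y) 0 := by
      unfold ip fourierCoeff
      refine integral_congr_ae (Filter.Eventually.of_forall fun x => ?_)
      simp only [huc, smul_eq_mul, neg_zero, fourier_zero, one_mul, Complex.conj_ofReal]
      ring
    have hLae : ip (Lax P D u one) (f n) = - ip (P uc) (f n) := by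
      rw [ip_congr_l (Lax_one_ae hD u), ip_neg_l]
    have hone : ip one (f n) = (starRingEnd ℂ) (fourierCoeff (f n) 0) := by
      rw [ip_conj, ip_one]
    rw [hLae, ip_szego hP hu (hsys.hardy n), ip_conj uc (f n), hfu, hT0, hone]
    simp only [map_neg, map_mul, Complex.conj_ofReal]
    ring
  have hbX : ∀ n, (inner ℂ (b n) xL : ℂ) = (lam n : ℂ) * inner ℂ (b n) x1 := by
    intro n; rw [hxLb n, hx1b n, hkey n]
  set c : ℕ → ℂ := fun n => inner ℂ (b n) x1 with hcdef
  have hx1x1 : (inner ℂ x1 x1 : ℂ) = 1 := by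
    rw [Submodule.coe_inner, hx1def]
    show (inner ℂ (memLp_one.toLp one) (memLp_one.toLp one) : ℂ) = 1
    rw [inner_toLp, ip_one_one]
  have hx1xL : (inner ℂ x1 xL : ℂ) = - ip uc one := by
    rw [Submodule.coe_inner, hx1def, hxLdef]
    show (inner ℂ (memLp_one.toLp one) (hLm.toLp _) : ℂ) = _
    rw [inner_toLp, hpart1]
  have hterm1 : ∀ n, ((‖c n‖^2 : ℝ) : ℂ) = (inner ℂ x1 (b n) : ℂ) * inner ℂ (b n) x1 := by
    intro n
    rw [← inner_conj_symm (𝕜 := ℂ) x1 (b n)]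
    show _ = (starRingEnd ℂ) (c n) * c n
    rw [RCLike.conj_mul]
    norm_cast
  have htermL : ∀ n, ((lam n * ‖c n‖^2 : ℝ) : ℂ) = (inner ℂ x1 (b n) : ℂ) * inner ℂ (b n) xL := by
    intro n
    rw [hbX n, ← inner_conj_symm (𝕜 := ℂ) x1 (b n)]
    show ((lam n * ‖c n‖^2 : ℝ) : ℂ) = (starRingEnd ℂ) (c n) * ((lam n : ℂ) * c n)
    have h1 : (starRingEnd ℂ) (c n) * c n = ((‖c n‖^2 : ℝ) : ℂ) := by
      rw [RCLike.conj_mul]; norm_cast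
    calc ((lam n * ‖c n‖^2 : ℝ) : ℂ)
        = (lam n : ℂ) * ((‖c n‖^2 : ℝ) : ℂ) := by push_cast; ring
      _ = (lam n : ℂ) * ((starRingEnd ℂ) (c n) * c n) := by rw [h1]
      _ = (starRingEnd ℂ) (c n) * ((lam n : ℂ) * c n) := by ring
  have h1R : HasSum (fun n => ‖c n‖^2) 1 := by
    have h := (b.hasSum_inner_mul_inner x1 x1).congr_fun hterm1
    rw [hx1x1] at h
    have h2 := h.mapL Complex.reCLM
    have hv : Complex.reCLM (1 : ℂ) = 1 := by simp
    rw [hv] at h2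
    exact h2.congr_fun fun n => by
      rw [Complex.reCLM_apply, Complex.ofReal_re]
  have h2R : HasSum (fun n => lam n * ‖c n‖^2) (- (ip uc one).re) := by
    have h := (b.hasSum_inner_mul_inner x1 xL).congr_fun htermL
    rw [hx1xL] at h
    have h2 := h.mapL Complex.reCLM
    have hv : Complex.reCLM (- ip uc one) = -(ip uc one).re := by
      rw [Complex.reCLM_apply, Complex.neg_re]
    rw [hv] at h2
    exact h2.congr_fun fun n => by
      rw [Complex.reCLM_apply, Complex.ofReal_re]
  have hle : lam 0 ≤ -(ip uc one).re := by
    have h0 : HasSum (fun n => lam 0 * ‖c n‖^2) (lam 0 * 1) := h1R.mul_left (lam 0)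
    have := hasSum_le
      (fun n => mul_le_mul_of_nonneg_right (hsys.mono (Nat.zero_le n)) (sq_nonneg _))
      h0 h2R
    simpa using this
  refine ⟨hpart1, hle, ?_, ?_⟩
  · -- equality implies constant
    intro heq
    have hz : HasSum (fun n => lam n * ‖c n‖^2 - lam 0 * ‖c n‖^2) 0 := by
      have := h2R.sub (h1R.mul_left (lam 0))
      rw [mul_one] at this
      simpa [← heq] using this
    have hzero : ∀ n, lam n * ‖c n‖^2 - lam 0 * ‖c n‖^2 = 0 := by
      have hnn : ∀ n, 0 ≤ lam n * ‖c n‖^2 - lam 0 * ‖c n‖^2 := fun n => by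
        nlinarith [sq_nonneg ‖c n‖, hsys.mono (Nat.zero_le n)]
      intro n
      exact congrFun ((hasSum_zero_iff_of_nonneg hnn).mp hz) n
    set y : S := xL - (lam 0 : ℂ) • x1 with hydef
    have hby : ∀ n, (inner ℂ (b n) y : ℂ) = 0 := by
      intro n
      rw [hydef, inner_sub_right, inner_smul_right (b n) x1 (lam 0 : ℂ), hbX n]
      show (lam n : ℂ) * c n - (lam 0 : ℂ) * c n = 0
      rcases eq_or_ne (c n) 0 with h | h
      · rw [h]; ring
      · have hll : lam n = lam 0 := by
          have h1 := hzero n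
          have hc2 : ‖c n‖^2 ≠ 0 := pow_ne_zero _ (norm_ne_zero_iff.2 h)
          have h2 : (lam n - lam 0) * ‖c n‖^2 = 0 := by ring_nf; linarith [h1]
          rcases mul_eq_zero.mp h2 with h3 | h3
          · linarith
          · exact absurd h3 hc2
        rw [hll]; ring
    have hy0 : y = 0 := by
      have hrepr : b.repr y = 0 := by
        ext n
        rw [b.repr_apply_apply, hby n]
        simp
      exact b.repr.injective (hrepr.trans (map_zero b.repr).symm)
    have hxLeq : xL = (lam 0 : ℂ) • x1 := by
      have := sub_eq_zero.mp hy0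
      exact this
    have hfe : hLm.toLp (Lax P D u one) = (lam 0 : ℂ) • memLp_one.toLp one := by
      have := congrArg (fun z : S => (z : Lp ℂ 2 μ)) hxLeq
      simpa [hxLdef, hx1def] using this
    have hae : Lax P D u one =ᵐ[μ] fun _ => (lam 0 : ℂ) := by
      have h1 := hLm.coeFn_toLp
      rw [hfe] at h1
      have h2 := Lp.coeFn_smul (lam 0 : ℂ) (memLp_one.toLp one)
      filter_upwards [h1.symm, h2, memLp_one.coeFn_toLp] with x hx1 hx2 hx3
      rw [hx1, hx2]
      show (lam 0 : ℂ) * _ = _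
      rw [hx3]
      simp [one]
    have hPuc : P uc =ᵐ[μ] fun _ => (-(lam 0 : ℝ) : ℂ) := by
      filter_upwards [hae, Lax_one_ae hD u] with x hx1 hx2
      have : -(P uc x) = (lam 0 : ℂ) := by rw [← hx2, hx1]
      push_cast
      linear_combination -this
    have hconstfc : ∀ (a : ℂ) (k : ℤ),
        fourierCoeff (fun _ : Circ => a) k = if k = 0 then a else 0 := by
      intro a k
      have : (fun _ : Circ => a) = fun x => a * one x := by funext x; simp [one]
      rw [this, fourierCoeff.const_mul, fc_one]
      split_ifs <;> simp
    have hcoefP : ∀ k, fourierCoeff (P uc) k = if k = 0 then (-(lam 0 : ℝ) : ℂ) else 0 := by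
      intro k
      rw [fc_congr hPuc k, hconstfc]
    have hcu : ∀ k : ℤ, fourierCoeff uc k = if k = 0 then (-(lam 0 : ℝ) : ℂ) else 0 := by
      intro k
      rcases lt_trichotomy k 0 with hk | hk | hk
      · have h1 : fourierCoeff uc k = (starRingEnd ℂ) (fourierCoeff uc (-k)) := by
          have := fc_real u (-k)
          rw [neg_neg] at this
          exact this
        have h2 : fourierCoeff uc (-k) = 0 := by
          have h3 := hPc (-k)
          rw [if_pos (by linarith : (0:ℤ) ≤ -k)] at h3
          rw [← h3, hcoefP]
          simp [(by linarith : -k ≠ 0)]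
        rw [h1, h2, map_zero, if_neg hk.ne]
      · subst hk
        have h3 := hPc 0
        rw [if_pos le_rfl] at h3
        rw [← h3, hcoefP]
      · have h3 := hPc k
        rw [if_pos hk.le] at h3
        rw [← h3, hcoefP]
    have huc_const : uc =ᵐ[μ] fun _ => ((-(lam 0) : ℝ) : ℂ) := by
      apply eq_of_fc_eq hu (memLp_const _)
      intro k
      rw [hcu k, hconstfc]
      split_ifs <;> simp
    refine ⟨-(lam 0), ?_⟩
    filter_upwards [huc_const] with x hx
    exact Complex.ofReal_injective hx
  · -- constant implies equality
    rintro ⟨cst, hcst⟩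
    have hucc : uc =ᵐ[μ] fun _ => (cst : ℂ) := by
      filter_upwards [hcst] with x hx
      show ((u x : ℝ) : ℂ) = ((cst : ℝ) : ℂ)
      exact_mod_cast hx
    have hconstfc : ∀ (a : ℂ) (k : ℤ),
        fourierCoeff (fun _ : Circ => a) k = if k = 0 then a else 0 := by
      intro a k
      have : (fun _ : Circ => a) = fun x => a * one x := by funext x; simp [one]
      rw [this, fourierCoeff.const_mul, fc_one]
      split_ifs <;> simp
    have hip : ip uc one = (cst : ℂ) := by
      rw [ip_one, fc_congr hucc 0, hconstfc]
      simp
    have hre : -(ip uc one).re = -cst := by rw [hip]; simp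
    rw [hre]
    have hge : -cst ≤ lam 0 := by
      obtain ⟨k, hk⟩ : ∃ k : ℤ, fourierCoeff (f 0) k ≠ 0 := by
        by_contra hall
        push_neg at hall
        have h0 := eq_zero_of_fc_zero (hsys.hardy 0).1 hall
        have h1 := hsys.ortho 0 0
        rw [if_pos rfl, ip_congr_l h0] at h1
        simp [ip] at h1
      have hk0 : 0 ≤ k := le_of_not_gt fun hneg => hk ((hsys.hardy 0).2 k hneg)
      have hprod0 : MemLp (fun x => uc x * f 0 x) 2 μ :=
        memLp_mul_of_ae_continuous hu (H1_exists_continuous (hsys.sobolev 0))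
      obtain ⟨hTm, hTc⟩ := hP _ hprod0
      obtain ⟨hDm0, hDc0⟩ := hD (f 0) (hsys.sobolev 0)
      have hL0 : Lax P D u (f 0) = fun x => D (f 0) x - P (fun y => uc y * f 0 y) x := rfl
      have e := fc_congr (hsys.eigen 0) k
      rw [hL0, fc_sub (hDm0.integrable one_le_two) (hTm.integrable one_le_two),
        hDc0 k, hTc k, fourierCoeff.const_mul, if_pos hk0] at e
      have hcoefprod : fourierCoeff (fun y => uc y * f 0 y) k
          = (cst : ℂ) * fourierCoeff (f 0) k := by
        have hconst : (fun y => uc y * f 0 y) =ᵐ[μ] fun y => (cst : ℂ) * f 0 y := by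
          filter_upwards [hucc] with x hx
          rw [hx]
        rw [fc_congr hconst k, fourierCoeff.const_mul]
      rw [hcoefprod] at e
      have hfac : ((k : ℂ) - (cst : ℂ) - ((lam 0 : ℝ) : ℂ)) * fourierCoeff (f 0) k = 0 := by
        linear_combination e
      have hre2 : (k : ℂ) - (cst : ℂ) - ((lam 0 : ℝ) : ℂ) = 0 := by
        rcases mul_eq_zero.mp hfac with h | h
        · exact h
        · exact absurd h hk
      have hreal : (k : ℝ) - cst - lam 0 = 0 := by
        have := congrArg Complex.re hre2
        push_cast at this
        simpa using this
      have hknn : (0:ℝ) ≤ (k : ℝ) := by exact_mod_cast hk0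
      linarith
    exact le_antisymm (by rw [← hre]; exact hle) hge


end BO
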